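/- arXiv:math/0305109 — 2 statements merged into one kernel-verified Lean document; each statement's English description precedes it below -/
import Mathlib

section
/- Let Φ be an Orlicz function, let φ, w : ℕ → ℝ be positive, nondecreasing weight sequences (indexed by n ≥ 1) satisfying the Δ₂-condition with constants C_φ and C_w respectively. Let a, b : ℤ → ℝ≥0 be summable, set A = Σ_{j∈ℤ} a(j) and B = Σ_{j∈ℤ} b(j), and suppose M_b := inf{λ > 0 : Σ_{k≥1} Φ(b(−k)·φ(k)/λ)·w(k) ≤ 1} and M_a (defined analogously for a) are both positive and finite. Let c(n) = Σ_{j∈ℤ} a(j)·b(n−j). Then with C₋ = (1 + C_w)·C_φ, one has Σ_{k≥1} Φ(c(−k)·φ(k) / (C₋·(A·M_b + B·M_a)))·w(k) ≤ 1; in particular the Luxemburg-type norm of {c(−k)}_{k≥1} is at most C₋·(A·M_b + B·M_a). -/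
/-!
Split the convolution according to which factor carries the larger index: for `m ≥ 1`,
`c(-m) ≤ ∑_{2n ≥ m} a(n - m) b(-n) + ∑_{2n ≥ m} b(n - m) a(-n)`.
In the first half the index `n` of `b` satisfies `m ≤ 2n`, so the Δ₂ conditions give
`φ(m) ≤ C_φ φ(n)` and `w(m) ≤ C_w w(n)`. Jensen's inequality with the weights `a(n - m) / (C_w A)`
followed by exchanging the two summations bounds the modular of this half at level `C_w C_φ A M_b`
by the modular of `b` at level `M_b`, which is at most `1`; symmetrically for the second half.
Convexity of the modular (the triangle inequality of the Luxemburg norm) then combines the halves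
at level `C_w C_φ (A M_b + B M_a) ≤ (1 + C_w) C_φ (A M_b + B M_a)`.
-/

open scoped ENNReal
open Filter

theorem MonotoneOn.map_nonneg {Φ : ℝ → ℝ} (hΦm : MonotoneOn Φ (Set.Ici 0)) (hΦ0 : Φ 0 = 0)
    {x : ℝ} (hx : 0 ≤ x) : 0 ≤ Φ x :=
  hΦ0 ▸ hΦm Set.self_mem_Ici hx hx

theorem ConvexOn.map_sum_le_of_sum_le_one {Φ : ℝ → ℝ} (hΦ : ConvexOn ℝ (Set.Ici 0) Φ)
    (hΦ0 : Φ 0 = 0) {ι : Type*} (s : Finset ι) {t x : ι → ℝ} (ht : ∀ i ∈ s, 0 ≤ t i)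
    (hts : ∑ i ∈ s, t i ≤ 1) (hx : ∀ i ∈ s, 0 ≤ x i) :
    Φ (∑ i ∈ s, t i * x i) ≤ ∑ i ∈ s, t i * Φ (x i) := by
  -- Jensen's inequality with the extra point `0` of weight `1 - ∑ i ∈ s, t i`
  have h := hΦ.map_sum_le (t := s.insertNone) (w := fun o => o.elim (1 - ∑ i ∈ s, t i) t)
    (p := fun o => o.elim 0 x) ?_ ?_ ?_
  · simpa [Finset.sum_insertNone, hΦ0] using h
  · rintro (_ | i) hi
    · simpa using hts
    · exact ht i (Finset.some_mem_insertNone.1 hi)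
  · simp [Finset.sum_insertNone]
  · rintro (_ | i) hi
    · exact Set.self_mem_Ici
    · exact hx i (Finset.some_mem_insertNone.1 hi)

theorem ConvexOn.ofReal_map_tsum_le {Φ : ℝ → ℝ} (hΦc : Continuous Φ)
    (hΦm : MonotoneOn Φ (Set.Ici 0)) (hΦ : ConvexOn ℝ (Set.Ici 0) Φ) (hΦ0 : Φ 0 = 0)
    {ι : Type*} {t x : ι → ℝ} (ht : ∀ i, 0 ≤ t i) (hx : ∀ i, 0 ≤ x i) (hts : Summable t)
    (ht1 : ∑' i, t i ≤ 1) (htx : Summable fun i => t i * x i) :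
    ENNReal.ofReal (Φ (∑' i, t i * x i)) ≤ ∑' i, ENNReal.ofReal (t i * Φ (x i)) := by
  have hlim : Tendsto (fun s : Finset ι => ENNReal.ofReal (Φ (∑ i ∈ s, t i * x i))) atTop
      (nhds (ENNReal.ofReal (Φ (∑' i, t i * x i)))) :=
    (ENNReal.continuous_ofReal.comp hΦc).continuousAt.tendsto.comp htx.hasSum
  refine le_of_tendsto' hlim fun s => ?_
  calc ENNReal.ofReal (Φ (∑ i ∈ s, t i * x i))
      ≤ ENNReal.ofReal (∑ i ∈ s, t i * Φ (x i)) :=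
        ENNReal.ofReal_le_ofReal <| hΦ.map_sum_le_of_sum_le_one hΦ0 s (fun i _ => ht i)
          ((hts.sum_le_tsum s fun i _ => ht i).trans ht1) fun i _ => hx i
    _ = ∑ i ∈ s, ENNReal.ofReal (t i * Φ (x i)) :=
        ENNReal.ofReal_sum_of_nonneg fun i _ => mul_nonneg (ht i) (hΦm.map_nonneg hΦ0 (hx i))
    _ ≤ ∑' i, ENNReal.ofReal (t i * Φ (x i)) := ENNReal.sum_le_tsum s

structure IsAdmissibleWeight (ν : ℕ → ℝ) (C : ℝ) : Prop where
  pos : ∀ n, 1 ≤ n → 0 < ν n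
  le_succ : ∀ n, 1 ≤ n → ν n ≤ ν (n + 1)
  doubling : ∀ n, 1 ≤ n → ν (2 * n) ≤ C * ν n

namespace IsAdmissibleWeight

variable {ν : ℕ → ℝ} {C : ℝ}

theorem le_of_le (h : IsAdmissibleWeight ν C) {m n : ℕ} (hm : 1 ≤ m) (hmn : m ≤ n) :
    ν m ≤ ν n :=
  monotoneOn_nat_Ici_of_le_succ h.le_succ hm (hm.trans hmn) hmn

theorem le_const_mul (h : IsAdmissibleWeight ν C) {m n : ℕ} (hm : 1 ≤ m) (hmn : m ≤ 2 * n) :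
    ν m ≤ C * ν n :=
  (h.le_of_le hm hmn).trans (h.doubling n (by omega))

theorem one_le_const (h : IsAdmissibleWeight ν C) : 1 ≤ C :=
  le_of_mul_le_mul_right
    ((one_mul _).trans_le ((h.le_succ 1 le_rfl).trans (h.doubling 1 le_rfl))) (h.pos 1 le_rfl)

end IsAdmissibleWeight

/-- `v k` is the entry of index `k + 1`: the sequences are indexed from `1`. -/
noncomputable def tailModular (Φ : ℝ → ℝ) (φ w v : ℕ → ℝ) (lam : ℝ) : ℝ≥0∞ :=
  ∑' k : ℕ, ENNReal.ofReal (Φ (v k * φ (k + 1) / lam)) * ENNReal.ofReal (w (k + 1))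

noncomputable def luxemburgNorm (Φ : ℝ → ℝ) (φ w v : ℕ → ℝ) : ℝ :=
  sInf {lam : ℝ | 0 < lam ∧ tailModular Φ φ w v lam ≤ 1}

section Modular

variable {Φ : ℝ → ℝ} {φ w v : ℕ → ℝ}

theorem tailModular_anti (hΦm : MonotoneOn Φ (Set.Ici 0)) (hφ : ∀ k, 0 ≤ φ (k + 1))
    (hv : ∀ k, 0 ≤ v k) {lam₁ lam₂ : ℝ} (hlam₁ : 0 < lam₁) (hlam : lam₁ ≤ lam₂) :
    tailModular Φ φ w v lam₂ ≤ tailModular Φ φ w v lam₁ := by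
  refine ENNReal.tsum_le_tsum fun k => mul_le_mul_left (ENNReal.ofReal_le_ofReal ?_) _
  have hvφ := mul_nonneg (hv k) (hφ k)
  exact hΦm (div_nonneg hvφ (hlam₁.trans_le hlam).le) (div_nonneg hvφ hlam₁.le)
    (div_le_div_of_nonneg_left hvφ hlam₁ hlam)

theorem luxemburgNorm_zero (hΦ0 : Φ 0 = 0) : luxemburgNorm Φ φ w 0 = 0 := by
  have h : {lam : ℝ | 0 < lam ∧ tailModular Φ φ w 0 lam ≤ 1} = Set.Ioi 0 := by
    ext lam
    simp [tailModular, hΦ0]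
  rw [luxemburgNorm, h, csInf_Ioi]

theorem tsum_pos_of_luxemburgNorm_pos (hΦ0 : Φ 0 = 0) {a : ℤ → ℝ} (ha0 : ∀ j, 0 ≤ a j)
    (ha : Summable a) (h : 0 < luxemburgNorm Φ φ w fun k => a (-((k : ℤ) + 1))) :
    0 < ∑' j, a j := by
  refine (tsum_nonneg ha0).lt_of_ne fun hA => h.ne' ?_
  have hzero : (fun k : ℕ => a (-((k : ℤ) + 1))) = 0 :=
    funext fun k => le_antisymm ((ha.le_tsum _ fun j _ => ha0 j).trans_eq hA.symm) (ha0 _)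
  rw [hzero, luxemburgNorm_zero hΦ0]

theorem tailModular_le_one_of_luxemburgNorm_lt (hΦm : MonotoneOn Φ (Set.Ici 0))
    (hφ : ∀ k, 0 ≤ φ (k + 1)) (hv : ∀ k, 0 ≤ v k) (hN : 0 < luxemburgNorm Φ φ w v) {lam : ℝ}
    (hlam : luxemburgNorm Φ φ w v < lam) : tailModular Φ φ w v lam ≤ 1 := by
  have hne : {lam : ℝ | 0 < lam ∧ tailModular Φ φ w v lam ≤ 1}.Nonempty :=
    Set.nonempty_iff_ne_empty.2 fun h => hN.ne' (by rw [luxemburgNorm, h, Real.sInf_empty])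
  obtain ⟨μ, ⟨hμ, hμ1⟩, hμlam⟩ := (csInf_lt_iff ⟨0, fun _ h => h.1.le⟩ hne).1 hlam
  exact (tailModular_anti hΦm hφ hv hμ hμlam.le).trans hμ1

theorem tailModular_luxemburgNorm_le_one (hΦc : Continuous Φ) (hΦm : MonotoneOn Φ (Set.Ici 0))
    (hφ : ∀ k, 0 ≤ φ (k + 1)) (hv : ∀ k, 0 ≤ v k) (hN : 0 < luxemburgNorm Φ φ w v) :
    tailModular Φ φ w v (luxemburgNorm Φ φ w v) ≤ 1 := by
  set N := luxemburgNorm Φ φ w v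
  refine ENNReal.tsum_le_of_sum_range_le fun n => ?_
  have hlim : Tendsto (fun lam => ∑ k ∈ Finset.range n,
      ENNReal.ofReal (Φ (v k * φ (k + 1) / lam)) * ENNReal.ofReal (w (k + 1)))
      (nhdsWithin N (Set.Ioi N)) (nhds (∑ k ∈ Finset.range n,
      ENNReal.ofReal (Φ (v k * φ (k + 1) / N)) * ENNReal.ofReal (w (k + 1)))) := by
    refine tendsto_finsetSum _ fun k _ =>
      ENNReal.Tendsto.mul_const ?_ (Or.inr ENNReal.ofReal_ne_top)
    exact tendsto_nhdsWithin_of_tendsto_nhds <|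
      ((ENNReal.continuous_ofReal.comp hΦc).tendsto _).comp
        (tendsto_const_nhds.div tendsto_id hN.ne')
  refine le_of_tendsto hlim ?_
  filter_upwards [self_mem_nhdsWithin] with lam hlam
  exact (ENNReal.sum_le_tsum _).trans (tailModular_le_one_of_luxemburgNorm_lt hΦm hφ hv hN hlam)

theorem tailModular_le_one_of_le_add (hΦm : MonotoneOn Φ (Set.Ici 0))
    (hΦ : ConvexOn ℝ (Set.Ici 0) Φ) (hφ : ∀ k, 0 ≤ φ (k + 1)) {u v₁ v₂ : ℕ → ℝ}
    (hu : ∀ k, 0 ≤ u k) (hv₁ : ∀ k, 0 ≤ v₁ k) (hv₂ : ∀ k, 0 ≤ v₂ k)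
    (huv : ∀ k, u k ≤ v₁ k + v₂ k) {lam₁ lam₂ : ℝ} (hlam₁ : 0 < lam₁) (hlam₂ : 0 < lam₂)
    (h₁ : tailModular Φ φ w v₁ lam₁ ≤ 1) (h₂ : tailModular Φ φ w v₂ lam₂ ≤ 1) :
    tailModular Φ φ w u (lam₁ + lam₂) ≤ 1 := by
  set θ := lam₁ / (lam₁ + lam₂)
  have hθ0 : 0 ≤ θ := by positivity
  have hθ1 : 0 ≤ 1 - θ := by
    rw [sub_nonneg, div_le_one (by positivity)]; linarith
  have hterm : ∀ k, ENNReal.ofReal (Φ (u k * φ (k + 1) / (lam₁ + lam₂)))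
        * ENNReal.ofReal (w (k + 1))
      ≤ ENNReal.ofReal θ
          * (ENNReal.ofReal (Φ (v₁ k * φ (k + 1) / lam₁)) * ENNReal.ofReal (w (k + 1)))
        + ENNReal.ofReal (1 - θ)
          * (ENNReal.ofReal (Φ (v₂ k * φ (k + 1) / lam₂)) * ENNReal.ofReal (w (k + 1))) := by
    intro k
    have hφk := hφ k
    have hx₁ : 0 ≤ v₁ k * φ (k + 1) / lam₁ := by have := hv₁ k; positivity
    have hx₂ : 0 ≤ v₂ k * φ (k + 1) / lam₂ := by have := hv₂ k; positivity
    have hmix : θ • (v₁ k * φ (k + 1) / lam₁) + (1 - θ) • (v₂ k * φ (k + 1) / lam₂)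
        = (v₁ k + v₂ k) * φ (k + 1) / (lam₁ + lam₂) := by
      simp only [θ, smul_eq_mul]; field_simp; ring
    have hsplit : u k * φ (k + 1) / (lam₁ + lam₂)
        ≤ θ • (v₁ k * φ (k + 1) / lam₁) + (1 - θ) • (v₂ k * φ (k + 1) / lam₂) := by
      rw [hmix]
      exact div_le_div_of_nonneg_right (mul_le_mul_of_nonneg_right (huv k) hφk) (by positivity)
    have hΦu := (hΦm (Set.mem_Ici.2 (by have := hu k; positivity))
      (hΦ.1 hx₁ hx₂ hθ0 hθ1 (by ring)) hsplit).trans (hΦ.2 hx₁ hx₂ hθ0 hθ1 (by ring))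
    calc _ ≤ ENNReal.ofReal (θ * Φ (v₁ k * φ (k + 1) / lam₁)
            + (1 - θ) * Φ (v₂ k * φ (k + 1) / lam₂)) * ENNReal.ofReal (w (k + 1)) := by
          gcongr
          simpa only [smul_eq_mul] using hΦu
      _ ≤ _ := by
          grw [ENNReal.ofReal_add_le, ENNReal.ofReal_mul hθ0, ENNReal.ofReal_mul hθ1]
          rw [add_mul, mul_assoc, mul_assoc]
  calc tailModular Φ φ w u (lam₁ + lam₂)
      ≤ ENNReal.ofReal θ * tailModular Φ φ w v₁ lam₁
        + ENNReal.ofReal (1 - θ) * tailModular Φ φ w v₂ lam₂ := by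
        rw [tailModular, tailModular, tailModular, ← ENNReal.tsum_mul_left,
          ← ENNReal.tsum_mul_left, ← ENNReal.tsum_add]
        exact ENNReal.tsum_le_tsum hterm
    _ ≤ ENNReal.ofReal θ * 1 + ENNReal.ofReal (1 - θ) * 1 := by gcongr
    _ = 1 := by
        rw [mul_one, mul_one, ← ENNReal.ofReal_add hθ0 hθ1, add_sub_cancel, ENNReal.ofReal_one]

end Modular

/-- With `v i = q (-(i + 1))`, the terms of `∑ j, p j * q (-(k + 1) - j)` in which the index
`i + 1` of `q` is at least half of `k + 1`. -/
noncomputable def halfConv (p : ℤ → ℝ) (v : ℕ → ℝ) (k : ℕ) : ℝ :=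
  ∑' i : ℕ, if k ≤ 2 * i + 1 then p (i - k) * v i else 0

theorem halfConv_nonneg {p : ℤ → ℝ} {v : ℕ → ℝ} (hp0 : ∀ j, 0 ≤ p j) (hv0 : ∀ i, 0 ≤ v i)
    (k : ℕ) : 0 ≤ halfConv p v k :=
  tsum_nonneg fun i => by split_ifs <;> first | exact mul_nonneg (hp0 _) (hv0 i) | exact le_rfl

theorem tsum_ite_eq_halfConv (p q : ℤ → ℝ) (k : ℕ) :
    ∑' j, (if (k : ℤ) + 1 ≤ 2 * (k + 1 + j) then p j * q (-((k : ℤ) + 1) - j) else 0)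
      = halfConv p (fun i => q (-((i : ℤ) + 1))) k := by
  rw [halfConv, ← (show Function.Injective fun i : ℕ => (i : ℤ) - k from
    fun i₁ i₂ h => by simpa using h).tsum_eq]
  · refine tsum_congr fun i => ?_
    congr 1
    · exact propext (by omega)
    · congr 2; ring
  · intro j hj
    have hcond : (k : ℤ) + 1 ≤ 2 * (k + 1 + j) := by
      by_contra h; exact hj (if_neg h)
    exact ⟨(k + j).toNat, by simp only; omega⟩

theorem tsum_mul_le_halfConv_add_halfConv {a b : ℤ → ℝ} (ha0 : ∀ j, 0 ≤ a j)
    (hb0 : ∀ j, 0 ≤ b j) (ha : Summable a) (hb : Summable b) (k : ℕ) :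
    ∑' j, a j * b (-((k : ℤ) + 1) - j)
      ≤ halfConv a (fun i => b (-((i : ℤ) + 1))) k
        + halfConv b (fun i => a (-((i : ℤ) + 1))) k := by
  set f : ℤ → ℝ := fun j => a j * b (-((k : ℤ) + 1) - j)
  set T₂ : ℤ → ℝ := fun j => if (k : ℤ) + 1 ≤ 2 * -j then f j else 0
  have hf0 : ∀ j, 0 ≤ f j := fun j => mul_nonneg (ha0 j) (hb0 _)
  have hf : Summable f := Summable.of_nonneg_of_le hf0
    (fun j => mul_le_mul_of_nonneg_left (hb.le_tsum _ fun i _ => hb0 i) (ha0 j))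
    (ha.mul_right (∑' i, b i))
  have hT : ∀ (P : ℤ → Prop) [DecidablePred P], Summable fun j => if P j then f j else 0 :=
    fun P _ => Summable.of_nonneg_of_le (fun j => by split_ifs; exacts [hf0 j, le_rfl])
      (fun j => by split_ifs; exacts [le_rfl, hf0 j]) hf
  have h₂ : ∑' j, T₂ j = halfConv b (fun i => a (-((i : ℤ) + 1))) k := by
    rw [← tsum_ite_eq_halfConv, ← (Equiv.subLeft (-((k : ℤ) + 1))).tsum_eq]
    refine tsum_congr fun j => ?_
    simp only [T₂, f, Equiv.subLeft_apply, sub_sub_cancel]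
    congr 1
    · exact propext (by omega)
    · exact mul_comm _ _
  rw [← tsum_ite_eq_halfConv, ← h₂, ← (hT _).tsum_add (hT _)]
  refine hf.tsum_le_tsum (fun j => ?_) ((hT _).add (hT _))
  -- every `j` lies in one of the halves, as `2 (k + 1 + j) + 2 (-j) = 2 (k + 1)`
  have := hf0 j
  split_ifs <;> first | omega | linarith

section HalfConv

variable {Φ : ℝ → ℝ} {φ w : ℕ → ℝ} {Cφ Cw : ℝ}

theorem map_mul_weight_le_of_le_two_mul (hΦm : MonotoneOn Φ (Set.Ici 0)) (hΦ0 : Φ 0 = 0)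
    (hφ : IsAdmissibleWeight φ Cφ) (hw : IsAdmissibleWeight w Cw) {y M : ℝ} (hy : 0 ≤ y)
    (hM : 0 < M) {k i : ℕ} (hki : k ≤ 2 * i + 1) :
    Φ (y * φ (k + 1) / (Cφ * M)) * w (k + 1) ≤ Cw * (Φ (y * φ (i + 1) / M) * w (i + 1)) := by
  have hCφ : 0 < Cφ := zero_lt_one.trans_le hφ.one_le_const
  have hφk := hφ.pos (k + 1) (by omega)
  have hx : 0 ≤ y * φ (i + 1) / M := by have := hφ.pos (i + 1) (by omega); positivity
  have harg : y * φ (k + 1) / (Cφ * M) ≤ y * φ (i + 1) / M := by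
    rw [div_le_div_iff₀ (by positivity) hM]
    calc y * φ (k + 1) * M ≤ y * (Cφ * φ (i + 1)) * M := by
          gcongr; exact hφ.le_const_mul (by omega) (by omega)
      _ = y * φ (i + 1) * (Cφ * M) := by ring
  calc Φ (y * φ (k + 1) / (Cφ * M)) * w (k + 1)
      ≤ Φ (y * φ (i + 1) / M) * (Cw * w (i + 1)) :=
        mul_le_mul (hΦm (Set.mem_Ici.2 (by positivity)) hx harg)
          (hw.le_const_mul (by omega) (by omega)) (hw.pos _ (by omega)).le
          (hΦm.map_nonneg hΦ0 hx)
    _ = Cw * (Φ (y * φ (i + 1) / M) * w (i + 1)) := by ring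

theorem ofReal_map_halfConv_le (hΦc : Continuous Φ) (hΦm : MonotoneOn Φ (Set.Ici 0))
    (hΦ : ConvexOn ℝ (Set.Ici 0) Φ) (hΦ0 : Φ 0 = 0) (hφ : IsAdmissibleWeight φ Cφ)
    (hw : IsAdmissibleWeight w Cw) {p : ℤ → ℝ} {v : ℕ → ℝ} (hp0 : ∀ j, 0 ≤ p j)
    (hp : Summable p) (hP : 0 < ∑' j, p j) (hv0 : ∀ i, 0 ≤ v i) (hv : Summable v) {M : ℝ}
    (hM : 0 < M) (k : ℕ) :
    ENNReal.ofReal (Φ (halfConv p v k * φ (k + 1) / (Cw * Cφ * (∑' j, p j) * M)))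
      ≤ ∑' i : ℕ, ENNReal.ofReal (p (i - k) / (Cw * ∑' j, p j)
          * Φ (if k ≤ 2 * i + 1 then v i * φ (k + 1) / (Cφ * M) else 0)) := by
  set P := ∑' j, p j
  have hCφ : 0 < Cφ := zero_lt_one.trans_le hφ.one_le_const
  have hCw : 1 ≤ Cw := hw.one_le_const
  have hφk := hφ.pos (k + 1) (by omega)
  have hweights : ∑' i : ℕ, p (i - k) / (Cw * P) ≤ 1 := by
    rw [tsum_div_const, div_le_one (by positivity)]
    calc ∑' i : ℕ, p (i - k) ≤ P :=
          tsum_comp_le_tsum_of_inj hp hp0 fun i₁ i₂ h => by simpa using h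
      _ ≤ Cw * P := le_mul_of_one_le_left hP.le hCw
  have hsum : halfConv p v k * φ (k + 1) / (Cw * Cφ * P * M) = ∑' i : ℕ, p (i - k) / (Cw * P)
      * (if k ≤ 2 * i + 1 then v i * φ (k + 1) / (Cφ * M) else 0) := by
    rw [halfConv, mul_div_assoc, ← tsum_mul_right]
    congr 1 with i
    split_ifs
    · field_simp
    · simp
  have hx0 : ∀ i : ℕ, 0 ≤ if k ≤ 2 * i + 1 then v i * φ (k + 1) / (Cφ * M) else 0 :=
    fun i => by have := hv0 i; split_ifs <;> positivity
  have ht0 : ∀ i : ℕ, 0 ≤ p (i - k) / (Cw * P) := fun i => by have := hp0 (i - k); positivity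
  have htx : Summable fun i : ℕ => p (i - k) / (Cw * P)
      * (if k ≤ 2 * i + 1 then v i * φ (k + 1) / (Cφ * M) else 0) := by
    refine Summable.of_nonneg_of_le (fun i => mul_nonneg (ht0 i) (hx0 i)) (fun i => ?_)
      (hv.mul_left (P / (Cw * P) * (φ (k + 1) / (Cφ * M))))
    have hvi := hv0 i
    split_ifs
    · calc p (i - k) / (Cw * P) * (v i * φ (k + 1) / (Cφ * M))
          ≤ P / (Cw * P) * (v i * φ (k + 1) / (Cφ * M)) := by
            gcongr; exact hp.le_tsum _ fun j _ => hp0 j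
        _ = _ := by ring
    · simp only [mul_zero]; positivity
  rw [hsum]
  exact ConvexOn.ofReal_map_tsum_le hΦc hΦm hΦ hΦ0 ht0 hx0
    ((hp.comp_injective fun i₁ i₂ h => by simpa using h).div_const _) hweights htx

theorem ofReal_halfConv_term_le (hΦm : MonotoneOn Φ (Set.Ici 0)) (hΦ0 : Φ 0 = 0)
    (hφ : IsAdmissibleWeight φ Cφ) (hw : IsAdmissibleWeight w Cw) {t P y M : ℝ} (ht : 0 ≤ t)
    (hP : 0 < P) (hy : 0 ≤ y) (hM : 0 < M) {k i : ℕ} :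
    ENNReal.ofReal (t / (Cw * P) * Φ (if k ≤ 2 * i + 1 then y * φ (k + 1) / (Cφ * M) else 0))
        * ENNReal.ofReal (w (k + 1))
      ≤ ENNReal.ofReal (t / P)
        * (ENNReal.ofReal (Φ (y * φ (i + 1) / M)) * ENNReal.ofReal (w (i + 1))) := by
  have hCw : 0 < Cw := zero_lt_one.trans_le hw.one_le_const
  have hCφ : 0 < Cφ := zero_lt_one.trans_le hφ.one_le_const
  split_ifs with hki
  · have hyφ : ∀ m : ℕ, 0 ≤ y * φ (m + 1) := fun m => mul_nonneg hy (hφ.pos _ (by omega)).le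
    have hΦk := hΦm.map_nonneg hΦ0 (by have := hyφ k; positivity : 0 ≤ y * φ (k + 1) / (Cφ * M))
    have hΦi := hΦm.map_nonneg hΦ0 (by have := hyφ i; positivity : 0 ≤ y * φ (i + 1) / M)
    rw [← ENNReal.ofReal_mul (by positivity), ← ENNReal.ofReal_mul hΦi,
      ← ENNReal.ofReal_mul (by positivity)]
    refine ENNReal.ofReal_le_ofReal ?_
    calc t / (Cw * P) * Φ (y * φ (k + 1) / (Cφ * M)) * w (k + 1)
        = t / (Cw * P) * (Φ (y * φ (k + 1) / (Cφ * M)) * w (k + 1)) := by ring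
      _ ≤ t / (Cw * P) * (Cw * (Φ (y * φ (i + 1) / M) * w (i + 1))) :=
        mul_le_mul_of_nonneg_left (map_mul_weight_le_of_le_two_mul hΦm hΦ0 hφ hw hy hM hki)
          (by positivity)
      _ = t / P * (Φ (y * φ (i + 1) / M) * w (i + 1)) := by field_simp
  · simp [hΦ0]

theorem tailModular_halfConv_le_one (hΦc : Continuous Φ) (hΦm : MonotoneOn Φ (Set.Ici 0))
    (hΦ : ConvexOn ℝ (Set.Ici 0) Φ) (hΦ0 : Φ 0 = 0) (hφ : IsAdmissibleWeight φ Cφ)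
    (hw : IsAdmissibleWeight w Cw) {p : ℤ → ℝ} {v : ℕ → ℝ} (hp0 : ∀ j, 0 ≤ p j)
    (hp : Summable p) (hP : 0 < ∑' j, p j) (hv0 : ∀ i, 0 ≤ v i) (hv : Summable v) {M : ℝ}
    (hM : 0 < M) (hvM : tailModular Φ φ w v M ≤ 1) :
    tailModular Φ φ w (halfConv p v) (Cw * Cφ * (∑' j, p j) * M) ≤ 1 := by
  set P := ∑' j, p j
  set G : ℕ → ℝ≥0∞ := fun i =>
    ENNReal.ofReal (Φ (v i * φ (i + 1) / M)) * ENNReal.ofReal (w (i + 1))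
  have hrow : ∀ i : ℕ, ∑' k : ℕ, ENNReal.ofReal (p (i - k) / P) ≤ 1 := by
    intro i
    calc ∑' k : ℕ, ENNReal.ofReal (p (i - k) / P) ≤ ∑' j, ENNReal.ofReal (p j / P) :=
          ENNReal.tsum_comp_le_tsum_of_injective (fun k₁ k₂ h => by simpa using h) _
      _ = 1 := by
        rw [← ENNReal.ofReal_tsum_of_nonneg (fun j => by have := hp0 j; positivity)
          (hp.div_const P), tsum_div_const, div_self hP.ne', ENNReal.ofReal_one]
  calc tailModular Φ φ w (halfConv p v) (Cw * Cφ * P * M)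
      ≤ ∑' k : ℕ, ∑' i : ℕ, ENNReal.ofReal (p (i - k) / P) * G i := by
        refine ENNReal.tsum_le_tsum fun k => ?_
        grw [ofReal_map_halfConv_le hΦc hΦm hΦ hΦ0 hφ hw hp0 hp hP hv0 hv hM k,
          ← ENNReal.tsum_mul_right]
        exact ENNReal.tsum_le_tsum fun i =>
          ofReal_halfConv_term_le hΦm hΦ0 hφ hw (hp0 _) hP (hv0 i) hM
    _ = ∑' i : ℕ, (∑' k : ℕ, ENNReal.ofReal (p (i - k) / P)) * G i := by
        rw [ENNReal.tsum_comm]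
        simp only [ENNReal.tsum_mul_right]
    _ ≤ ∑' i : ℕ, G i := ENNReal.tsum_le_tsum fun i => mul_le_of_le_one_left' (hrow i)
    _ ≤ 1 := hvM

end HalfConv

theorem stmt_6_general (Φ : ℝ → ℝ)
    (hΦc : Continuous Φ)
    (hΦm : MonotoneOn Φ (Set.Ici 0))
    (hΦconv : ConvexOn ℝ (Set.Ici 0) Φ)
    (hΦ0 : Φ 0 = 0)
    (φ w : ℕ → ℝ) (Cφ Cw : ℝ)
    (hφpos : ∀ n, 1 ≤ n → 0 < φ n) (hφmono : ∀ n, 1 ≤ n → φ n ≤ φ (n + 1))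
    (hφΔ₂ : ∀ n, 1 ≤ n → φ (2 * n) ≤ Cφ * φ n)
    (hwpos : ∀ n, 1 ≤ n → 0 < w n) (hwmono : ∀ n, 1 ≤ n → w n ≤ w (n + 1))
    (hwΔ₂ : ∀ n, 1 ≤ n → w (2 * n) ≤ Cw * w n)
    (a b : ℤ → ℝ) (ha0 : ∀ j, 0 ≤ a j) (hb0 : ∀ j, 0 ≤ b j)
    (ha : Summable a) (hb : Summable b)
    (A B : ℝ) (hA : (∑' j : ℤ, a j) = A) (hB : (∑' j : ℤ, b j) = B)
    (Ma Mb : ℝ)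
    (hMa : Ma = sInf {lam : ℝ | 0 < lam ∧
        (∑' k : ℕ, ENNReal.ofReal (Φ (a (-((k : ℤ) + 1)) * φ (k + 1) / lam))
          * ENNReal.ofReal (w (k + 1))) ≤ 1})
    (hMb : Mb = sInf {lam : ℝ | 0 < lam ∧
        (∑' k : ℕ, ENNReal.ofReal (Φ (b (-((k : ℤ) + 1)) * φ (k + 1) / lam))
          * ENNReal.ofReal (w (k + 1))) ≤ 1})
    (hMapos : 0 < Ma) (hMbpos : 0 < Mb)
    (c : ℤ → ℝ) (hc : ∀ n : ℤ, c n = ∑' j : ℤ, a j * b (n - j)) :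
    (∑' k : ℕ, ENNReal.ofReal
        (Φ (c (-((k : ℤ) + 1)) * φ (k + 1) / ((1 + Cw) * Cφ * (A * Mb + B * Ma))))
      * ENNReal.ofReal (w (k + 1))) ≤ 1 ∧
    sInf {lam : ℝ | 0 < lam ∧
        (∑' k : ℕ, ENNReal.ofReal (Φ (c (-((k : ℤ) + 1)) * φ (k + 1) / lam))
          * ENNReal.ofReal (w (k + 1))) ≤ 1}
      ≤ (1 + Cw) * Cφ * (A * Mb + B * Ma) := by
  have hφ : IsAdmissibleWeight φ Cφ := ⟨hφpos, hφmono, hφΔ₂⟩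
  have hw : IsAdmissibleWeight w Cw := ⟨hwpos, hwmono, hwΔ₂⟩
  have hφ0 : ∀ k, 0 ≤ φ (k + 1) := fun k => (hφpos _ (by omega)).le
  set ta : ℕ → ℝ := fun k => a (-((k : ℤ) + 1))
  set tb : ℕ → ℝ := fun k => b (-((k : ℤ) + 1))
  set tc : ℕ → ℝ := fun k => c (-((k : ℤ) + 1))
  change Ma = luxemburgNorm Φ φ w ta at hMa
  change Mb = luxemburgNorm Φ φ w tb at hMb
  have hApos : 0 < A := hA ▸ tsum_pos_of_luxemburgNorm_pos hΦ0 ha0 ha (hMa ▸ hMapos)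
  have hBpos : 0 < B := hB ▸ tsum_pos_of_luxemburgNorm_pos hΦ0 hb0 hb (hMb ▸ hMbpos)
  have hab := hA ▸ tailModular_halfConv_le_one hΦc hΦm hΦconv hΦ0 hφ hw ha0 ha (hA ▸ hApos)
    (fun i => hb0 _) (hb.comp_injective fun i₁ i₂ h => by simpa using h) hMbpos
    (hMb ▸ tailModular_luxemburgNorm_le_one hΦc hΦm hφ0 (fun k => hb0 _) (hMb ▸ hMbpos))
  have hba := hB ▸ tailModular_halfConv_le_one hΦc hΦm hΦconv hΦ0 hφ hw hb0 hb (hB ▸ hBpos)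
    (fun i => ha0 _) (ha.comp_injective fun i₁ i₂ h => by simpa using h) hMapos
    (hMa ▸ tailModular_luxemburgNorm_le_one hΦc hΦm hφ0 (fun k => ha0 _) (hMa ▸ hMapos))
  have htc0 : ∀ k, 0 ≤ tc k := fun k =>
    (hc _).ge.trans' (tsum_nonneg fun j => mul_nonneg (ha0 j) (hb0 _))
  have hCφ := hφ.one_le_const
  have hCw := hw.one_le_const
  have htc := tailModular_le_one_of_le_add hΦm hΦconv hφ0 htc0
    (halfConv_nonneg ha0 fun i => hb0 _) (halfConv_nonneg hb0 fun i => ha0 _)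
    (fun k => (hc _).trans_le (tsum_mul_le_halfConv_add_halfConv ha0 hb0 ha hb k))
    (by positivity) (by positivity) hab hba
  have hlam : Cw * Cφ * A * Mb + Cw * Cφ * B * Ma ≤ (1 + Cw) * Cφ * (A * Mb + B * Ma) := by
    nlinarith [mul_pos hApos hMbpos, mul_pos hBpos hMapos]
  have hfinal : tailModular Φ φ w tc ((1 + Cw) * Cφ * (A * Mb + B * Ma)) ≤ 1 :=
    (tailModular_anti hΦm hφ0 htc0 (by positivity) hlam).trans htc
  exact ⟨hfinal, csInf_le ⟨0, fun _ h => h.1.le⟩ ⟨by positivity, hfinal⟩⟩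

/-- The key estimate in the proof of the main theorem: for an Orlicz
function `Φ`, weights `φ, w` in the admissible class (positive,
nondecreasing, Δ₂), summable nonnegative `a, b : ℤ → ℝ` with sums `A, B`
and Luxemburg norms `Ma, Mb` of `{a(-k)}_{k≥1}`, `{b(-k)}_{k≥1}`, the
convolution `c` satisfies
`Σ_{k≥1} Φ(c(-k) φ k / (C₋ (A Mb + B Ma))) w k ≤ 1` with
`C₋ = (1 + C_w) C_φ`; in particular the Luxemburg norm of `{c(-k)}_{k≥1}`
is at most `C₋ (A Mb + B Ma)`. -/
theorem stmt_6 (Φ : ℝ → ℝ)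
    (hΦc : Continuous Φ)
    (hΦm : MonotoneOn Φ (Set.Ici 0))
    (hΦconv : ConvexOn ℝ (Set.Ici 0) Φ)
    (hΦ0 : Φ 0 = 0)
    (hΦtop : Tendsto Φ atTop atTop)
    (φ w : ℕ → ℝ) (Cφ Cw : ℝ)
    (hφpos : ∀ n, 1 ≤ n → 0 < φ n) (hφmono : ∀ n, 1 ≤ n → φ n ≤ φ (n + 1))
    (hφΔ₂ : ∀ n, 1 ≤ n → φ (2 * n) ≤ Cφ * φ n)
    (hwpos : ∀ n, 1 ≤ n → 0 < w n) (hwmono : ∀ n, 1 ≤ n → w n ≤ w (n + 1))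
    (hwΔ₂ : ∀ n, 1 ≤ n → w (2 * n) ≤ Cw * w n)
    (a b : ℤ → ℝ) (ha0 : ∀ j, 0 ≤ a j) (hb0 : ∀ j, 0 ≤ b j)
    (ha : Summable a) (hb : Summable b)
    (A B : ℝ) (hA : (∑' j : ℤ, a j) = A) (hB : (∑' j : ℤ, b j) = B)
    (Ma Mb : ℝ)
    (hMa : Ma = sInf {lam : ℝ | 0 < lam ∧
        (∑' k : ℕ, ENNReal.ofReal (Φ (a (-((k : ℤ) + 1)) * φ (k + 1) / lam))
          * ENNReal.ofReal (w (k + 1))) ≤ 1})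
    (hMb : Mb = sInf {lam : ℝ | 0 < lam ∧
        (∑' k : ℕ, ENNReal.ofReal (Φ (b (-((k : ℤ) + 1)) * φ (k + 1) / lam))
          * ENNReal.ofReal (w (k + 1))) ≤ 1})
    (hMapos : 0 < Ma) (hMbpos : 0 < Mb)
    (c : ℤ → ℝ) (hc : ∀ n : ℤ, c n = ∑' j : ℤ, a j * b (n - j)) :
    (∑' k : ℕ, ENNReal.ofReal
        (Φ (c (-((k : ℤ) + 1)) * φ (k + 1) / ((1 + Cw) * Cφ * (A * Mb + B * Ma))))
      * ENNReal.ofReal (w (k + 1))) ≤ 1 ∧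
    sInf {lam : ℝ | 0 < lam ∧
        (∑' k : ℕ, ENNReal.ofReal (Φ (c (-((k : ℤ) + 1)) * φ (k + 1) / lam))
          * ENNReal.ofReal (w (k + 1))) ≤ 1}
      ≤ (1 + Cw) * Cφ * (A * Mb + B * Ma) :=
  stmt_6_general Φ hΦc hΦm hΦconv hΦ0 φ w Cφ Cw hφpos hφmono hφΔ₂ hwpos hwmono hwΔ₂ a b ha0 hb0 ha
    hb A B hA hB Ma Mb hMa hMb hMapos hMbpos c hc
end

section
/- Let Φ be an Orlicz function, and let φ, w : ℕ → ℝ be positive nondecreasing weight sequences satisfying the Δ₂-condition with constants C_φ, C_w. Let a : ℤ → ℝ≥0 with Σ_{j∈ℤ} a(j) = A < ∞ and b : ℕ → ℝ≥0. Then for every N ≥ 1 and λ > 0, Σ_{k=1}^N Σ_{j=1}^{⌊k/2⌋} a(−j)·Φ(b(k−j)·φ(k)/λ)·w(k) ≤ C_w·A·Σ_{j=1}^∞ Φ(C_φ·b(j)·φ(j)/λ)·w(j). -/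
open scoped ENNReal
open Filter

private lemma step_mono (f : ℕ → ℝ) (hf : ∀ n, 1 ≤ n → f n ≤ f (n + 1)) :
    ∀ p q : ℕ, 1 ≤ p → p ≤ q → f p ≤ f q := by
  intro p q hp hpq
  induction q with
  | zero => exact absurd hpq (by omega)
  | succ n ih =>
      rcases Nat.lt_or_ge p (n + 1) with h | h
      · exact (ih (by omega)).trans (hf n (by omega))
      · have hpn : p = n + 1 := by omega
        subst hpn; exact le_rfl

/-- The `σ₂`-estimate: for an Orlicz function `Φ`, positive nondecreasing
Δ₂-weights `φ, w` and summable `a : ℤ → [0,∞)` with sum `A`,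
`Σ_{k=1}^N Σ_{j=1}^{⌊k/2⌋} a(-j) Φ(b(k-j) φ k / λ) w k
  ≤ C_w A Σ_{j≥1} Φ(C_φ b j φ j / λ) w j`. -/
theorem stmt_15 (Φ : ℝ → ℝ)
    (hΦc : Continuous Φ)
    (hΦm : MonotoneOn Φ (Set.Ici 0))
    (hΦconv : ConvexOn ℝ (Set.Ici 0) Φ)
    (hΦ0 : Φ 0 = 0)
    (hΦtop : Tendsto Φ atTop atTop)
    (φ w : ℕ → ℝ) (Cφ Cw : ℝ)
    (hφpos : ∀ n, 1 ≤ n → 0 < φ n) (hφmono : ∀ n, 1 ≤ n → φ n ≤ φ (n + 1))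
    (hφΔ₂ : ∀ n, 1 ≤ n → φ (2 * n) ≤ Cφ * φ n)
    (hwpos : ∀ n, 1 ≤ n → 0 < w n) (hwmono : ∀ n, 1 ≤ n → w n ≤ w (n + 1))
    (hwΔ₂ : ∀ n, 1 ≤ n → w (2 * n) ≤ Cw * w n)
    (a : ℤ → ℝ) (ha0 : ∀ j, 0 ≤ a j) (A : ℝ) (hA : HasSum a A)
    (b : ℕ → ℝ) (hb0 : ∀ j, 1 ≤ j → 0 ≤ b j)
    (N : ℕ) (hN : 1 ≤ N) (lam : ℝ) (hlam : 0 < lam) :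
    (∑ k ∈ Finset.Icc 1 N, ∑ j ∈ Finset.Icc 1 (k / 2),
        ENNReal.ofReal (a (-(j : ℤ))) * ENNReal.ofReal (Φ (b (k - j) * φ k / lam))
          * ENNReal.ofReal (w k))
      ≤ ENNReal.ofReal Cw * ENNReal.ofReal A *
        ∑' j : ℕ, ENNReal.ofReal (Φ (Cφ * b (j + 1) * φ (j + 1) / lam))
          * ENNReal.ofReal (w (j + 1)) := by
  set S : ℕ → ℝ≥0∞ := fun m =>
    ENNReal.ofReal (Φ (Cφ * b m * φ m / lam)) * ENNReal.ofReal (w m) with hSdef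
  set g : ℕ → ℝ≥0∞ := fun j => ENNReal.ofReal (a (-(j : ℤ))) with hgdef
  -- termwise bound
  have key : ∀ k ∈ Finset.Icc 1 N, ∀ j ∈ Finset.Icc 1 (k / 2),
      g j * ENNReal.ofReal (Φ (b (k - j) * φ k / lam)) * ENNReal.ofReal (w k)
        ≤ ENNReal.ofReal Cw * (g j * S (k - j)) := by
    intro k hk j hj
    simp only [Finset.mem_Icc] at hk hj
    have hj2 : 2 * j ≤ k := by omega
    set m := k - j with hm
    have hm1 : 1 ≤ m := by omega
    have hk2m : k ≤ 2 * m := by omega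
    have hφk : φ k ≤ Cφ * φ m :=
      (step_mono φ hφmono k (2 * m) hk.1 hk2m).trans (hφΔ₂ m hm1)
    have hwk : w k ≤ Cw * w m :=
      (step_mono w hwmono k (2 * m) hk.1 hk2m).trans (hwΔ₂ m hm1)
    have hCw : 0 < Cw := by
      have h1 := hwpos (2 * m) (by omega)
      have h2 := hwΔ₂ m hm1
      have h3 := hwpos m hm1
      nlinarith
    have hb := hb0 m hm1
    have harg1 : 0 ≤ b m * φ k / lam :=
      div_nonneg (mul_nonneg hb (hφpos k hk.1).le) hlam.le
    have hargle : b m * φ k / lam ≤ Cφ * b m * φ m / lam := by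
      have h : b m * φ k ≤ Cφ * b m * φ m := by
        nlinarith [mul_le_mul_of_nonneg_left hφk hb]
      gcongr
    have hΦle : Φ (b m * φ k / lam) ≤ Φ (Cφ * b m * φ m / lam) :=
      hΦm harg1 (harg1.trans hargle) hargle
    calc g j * ENNReal.ofReal (Φ (b m * φ k / lam)) * ENNReal.ofReal (w k)
        ≤ g j * ENNReal.ofReal (Φ (Cφ * b m * φ m / lam)) *
            (ENNReal.ofReal Cw * ENNReal.ofReal (w m)) := by
          rw [← ENNReal.ofReal_mul hCw.le]
          exact mul_le_mul' (mul_le_mul' le_rfl (ENNReal.ofReal_le_ofReal hΦle))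
            (ENNReal.ofReal_le_ofReal hwk)
      _ = ENNReal.ofReal Cw * (g j * S m) := by
          simp only [hSdef]; ring
  -- sum the termwise bound
  have step1 : (∑ k ∈ Finset.Icc 1 N, ∑ j ∈ Finset.Icc 1 (k / 2),
        g j * ENNReal.ofReal (Φ (b (k - j) * φ k / lam)) * ENNReal.ofReal (w k))
      ≤ ENNReal.ofReal Cw * ∑ k ∈ Finset.Icc 1 N, ∑ j ∈ Finset.Icc 1 (k / 2),
          g j * S (k - j) := by
    rw [Finset.mul_sum]
    refine Finset.sum_le_sum fun k hk => ?_
    rw [Finset.mul_sum]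
    exact Finset.sum_le_sum fun j hj => key k hk j hj
  -- swap: bound the double sum by a product sum
  have step2 : (∑ k ∈ Finset.Icc 1 N, ∑ j ∈ Finset.Icc 1 (k / 2), g j * S (k - j))
      ≤ (∑ j ∈ Finset.Icc 1 N, g j) * ∑ m ∈ Finset.Icc 1 N, S m := by
    rw [Finset.sum_sigma']
    have hinj : Set.InjOn (fun p : (_ : ℕ) × ℕ => (p.2, p.1 - p.2))
        ((Finset.Icc 1 N).sigma fun k => Finset.Icc 1 (k / 2)) := by
      intro p hp q hq h
      simp only [Finset.coe_sigma, Set.mem_sigma_iff, Finset.mem_coe,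
        Finset.mem_Icc] at hp hq
      have h1 : p.2 = q.2 := congrArg Prod.fst h
      have h2 : p.1 - p.2 = q.1 - q.2 := congrArg Prod.snd h
      have : p.1 = q.1 := by omega
      exact Sigma.ext this (by simp [h1])
    calc (∑ p ∈ (Finset.Icc 1 N).sigma fun k => Finset.Icc 1 (k / 2),
            g p.2 * S (p.1 - p.2))
        = ∑ q ∈ ((Finset.Icc 1 N).sigma fun k => Finset.Icc 1 (k / 2)).image
            (fun p => (p.2, p.1 - p.2)), g q.1 * S q.2 := by
          rw [Finset.sum_image (fun p hp q hq h => hinj hp hq h)]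
      _ ≤ ∑ q ∈ Finset.Icc 1 N ×ˢ Finset.Icc 1 N, g q.1 * S q.2 := by
          refine Finset.sum_le_sum_of_subset ?_
          intro q hq
          simp only [Finset.mem_image, Finset.mem_sigma, Finset.mem_Icc] at hq
          obtain ⟨p, ⟨hp1, hp2⟩, rfl⟩ := hq
          simp only [Finset.mem_product, Finset.mem_Icc]
          omega
      _ = (∑ j ∈ Finset.Icc 1 N, g j) * ∑ m ∈ Finset.Icc 1 N, S m := by
          rw [Finset.sum_mul_sum, Finset.sum_product]
  -- bound finite sums
  have stepA : (∑ j ∈ Finset.Icc 1 N, g j) ≤ ENNReal.ofReal A := by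
    have hinj : Set.InjOn (fun j : ℕ => -(j : ℤ)) (Finset.Icc 1 N) := by
      intro x _ y _ h; simpa using h
    have h1 : (∑ j ∈ Finset.Icc 1 N, a (-(j : ℤ)))
        = ∑ i ∈ (Finset.Icc 1 N).image (fun j : ℕ => -(j : ℤ)), a i := by
      rw [Finset.sum_image (fun x hx y hy h => hinj hx hy h)]
    have h2 : (∑ i ∈ (Finset.Icc 1 N).image (fun j : ℕ => -(j : ℤ)), a i) ≤ A :=
      sum_le_hasSum _ (fun i _ => ha0 i) hA
    calc (∑ j ∈ Finset.Icc 1 N, g j)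
        = ENNReal.ofReal (∑ j ∈ Finset.Icc 1 N, a (-(j : ℤ))) := by
          rw [ENNReal.ofReal_sum_of_nonneg (fun j _ => ha0 _)]
      _ ≤ ENNReal.ofReal A := ENNReal.ofReal_le_ofReal (h1 ▸ h2)
  have stepB : (∑ m ∈ Finset.Icc 1 N, S m) ≤ ∑' j : ℕ, S (j + 1) := by
    have : (∑ m ∈ Finset.Icc 1 N, S m) = ∑ i ∈ Finset.range N, S (i + 1) := by
      rw [show Finset.Icc 1 N = Finset.Ico 1 (N + 1) by rw [Finset.Ico_add_one_right_eq_Icc],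
        Finset.sum_Ico_eq_sum_range]
      simp [add_comm]
    rw [this]
    exact ENNReal.sum_le_tsum _
  calc (∑ k ∈ Finset.Icc 1 N, ∑ j ∈ Finset.Icc 1 (k / 2),
        g j * ENNReal.ofReal (Φ (b (k - j) * φ k / lam)) * ENNReal.ofReal (w k))
      ≤ ENNReal.ofReal Cw * ((∑ j ∈ Finset.Icc 1 N, g j) * ∑ m ∈ Finset.Icc 1 N, S m) :=
        step1.trans (mul_le_mul' le_rfl step2)
    _ ≤ ENNReal.ofReal Cw * (ENNReal.ofReal A * ∑' j : ℕ, S (j + 1)) :=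
        mul_le_mul' le_rfl (mul_le_mul' stepA stepB)
    _ = ENNReal.ofReal Cw * ENNReal.ofReal A *
        ∑' j : ℕ, ENNReal.ofReal (Φ (Cφ * b (j + 1) * φ (j + 1) / lam))
          * ENNReal.ofReal (w (j + 1)) := by
        rw [mul_assoc]
end
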